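/- For every countable Boolean algebra 𝔄 there exist a Boolean algebra 𝔅 and an injective map 𝔣 : 𝔄 → 𝔅 such that: (T.1) 𝔅 is generated as a Boolean algebra by 𝔣[𝔄] (in particular 𝔅 is countable); (T.2) for every finite subalgebra 𝔄' of 𝔄, the family 𝔣[atoms(𝔄')] is *-free in 𝔅; and (T.3) 𝔣(a ∨ b) = 𝔣(a) ∨ 𝔣(b) for all a, b ∈ 𝔄. -/

import Mathlib

/-!
Enumerate the nonzero elements of `𝔄` as points and send `a` to the set of points meeting `a`.
This map preserves `⊔`, `⊥` and `⊤`, and reflects `≤` (a point on `a \ b` witnesses `a ≰ b`);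
`𝔅` is the Boolean algebra of sets generated by its image, countable because `𝔄` is. If
`e₁, …, eₙ` are the atoms of a finite subalgebra and `J ≠ ∅`, the point sitting on
`⨆_{j ∈ J} e_j` meets `e_j` exactly for `j ∈ J`, so it lies in
`⋂_{j ∈ J} 𝔣(e_j) ∩ ⋂_{j ∉ J} 𝔣(e_j)ᶜ`.
-/
/-- A finite indexed family `b₁, …, bₙ` in a Boolean algebra is *-free:
`b₁ ⊔ ⋯ ⊔ bₙ = ⊤` and for every nonempty `J ⊆ [n]`,
`(⨅_{j∈J} b j) ⊓ (⨅_{j∉J} (b j)ᶜ) ≠ ⊥`. -/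
def StarFree {B : Type*} [BooleanAlgebra B] {n : ℕ} (b : Fin n → B) : Prop :=
  Finset.univ.sup b = ⊤ ∧
    ∀ J : Finset (Fin n), J.Nonempty → J.inf b ⊓ Jᶜ.inf (fun i => (b i)ᶜ) ≠ ⊥

/-- `S` is a (Boolean) subalgebra of the Boolean algebra `A`. -/
def IsBoolSubalgebra {A : Type*} [BooleanAlgebra A] (S : Set A) : Prop :=
  ⊥ ∈ S ∧ ⊤ ∈ S ∧ (∀ x ∈ S, ∀ y ∈ S, x ⊔ y ∈ S) ∧
    (∀ x ∈ S, ∀ y ∈ S, x ⊓ y ∈ S) ∧ (∀ x ∈ S, xᶜ ∈ S)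

/-- The subalgebra of `A` generated by a set `G`. -/
def boolGenBy {A : Type*} [BooleanAlgebra A] (G : Set A) : Set A :=
  ⋂₀ {S : Set A | IsBoolSubalgebra S ∧ G ⊆ S}

/-- `x` is an atom of the subalgebra `S`. -/
def IsAtomIn {A : Type*} [BooleanAlgebra A] (S : Set A) (x : A) : Prop :=
  x ∈ S ∧ x ≠ ⊥ ∧ ∀ y ∈ S, y ≤ x → y = ⊥ ∨ y = x


open Set Function BooleanSubalgebra

section Countability

variable {α : Type*}

lemma Set.Countable.setOf_finset_subset {s : Set α} (hs : s.Countable) :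
    {t : Finset α | ↑t ⊆ s}.Countable := by
  classical
  have := hs.to_subtype
  refine (countable_range fun u : Finset s => u.map (.subtype _)).mono fun t ht => ?_
  exact ⟨t.subtype (· ∈ s), Finset.subtype_map_of_mem ht⟩

lemma Set.Countable.supClosure [SemilatticeSup α] [OrderBot α] {s : Set α} (hs : s.Countable) :
    (supClosure s).Countable :=
  (hs.setOf_finset_subset.image fun t => t.sup id).mono <| by
    rintro _ ⟨t, ht, hts, rfl⟩
    exact ⟨t, hts, (Finset.sup'_eq_sup ht id).symm⟩

lemma Set.Countable.infClosure [SemilatticeInf α] [OrderTop α] {s : Set α} (hs : s.Countable) :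
    (infClosure s).Countable :=
  (hs.setOf_finset_subset.image fun t => t.inf id).mono <| by
    rintro _ ⟨t, ht, hts, rfl⟩
    exact ⟨t, hts, (Finset.inf'_eq_inf ht id).symm⟩

lemma Set.Countable.latticeClosure [DistribLattice α] [BoundedOrder α] {s : Set α}
    (hs : s.Countable) : (latticeClosure s).Countable := by
  simpa only [supClosure_infClosure] using hs.infClosure.supClosure

variable [BooleanAlgebra α]

/-- Every element of the closure is a finite join of differences of elements of the lattice
generated by `s ∪ {⊥, ⊤}`. -/
lemma BooleanSubalgebra.countable_closure {s : Set α} (hs : s.Countable) :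
    (closure s : Set α).Countable := by
  set t := latticeClosure (s ∪ {⊥, ⊤})
  have := (hs.union (toFinite {⊥, ⊤}).countable).latticeClosure.to_subtype
  have hst : closure s ≤ closure t :=
    closure_mono (subset_union_left.trans subset_latticeClosure)
  refine (countable_range fun u : Finset (t × t) => u.sup fun x => x.1.1 \ x.2.1).mono
    fun a ha => ?_
  obtain ⟨u, rfl⟩ := (mem_closure_iff_sup_sdiff isSublattice_latticeClosure
    (subset_latticeClosure (by simp)) (subset_latticeClosure (by simp))).1 (hst ha)
  exact ⟨u, rfl⟩

end Countability

section Subalgebras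

variable {β : Type*} [BooleanAlgebra β]

def IsBoolSubalgebra.toBooleanSubalgebra {S : Set β} (hS : IsBoolSubalgebra S) :
    BooleanSubalgebra β where
  carrier := S
  supClosed' _ hx _ hy := hS.2.2.1 _ hx _ hy
  infClosed' _ hx _ hy := hS.2.2.2.1 _ hx _ hy
  compl_mem' hx := hS.2.2.2.2 _ hx
  bot_mem' := hS.1

lemma BooleanSubalgebra.isBoolSubalgebra (L : BooleanSubalgebra β) :
    IsBoolSubalgebra (L : Set β) :=
  ⟨L.bot_mem, L.top_mem, fun _ hx _ hy => L.sup_mem hx hy, fun _ hx _ hy => L.inf_mem hx hy,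
    fun _ hx => L.compl_mem hx⟩

lemma boolGenBy_eq_closure (G : Set β) : boolGenBy G = closure G := by
  ext x
  simp only [boolGenBy, mem_sInter, mem_ofPred_eq, SetLike.mem_coe, mem_closure, and_imp]
  exact ⟨fun h L hGL => h L L.isBoolSubalgebra hGL,
    fun h S hS hGS => h (L := hS.toBooleanSubalgebra) hGS⟩

lemma BooleanSubalgebra.closure_preimage_val (s : Set β) :
    closure ((↑) ⁻¹' s : Set (closure s)) = ⊤ := by
  have hle : closure s ≤ (closure ((↑) ⁻¹' s : Set (closure s))).map (closure s).subtype :=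
    closure_le.2 fun x hx => ⟨⟨x, subset_closure hx⟩, subset_closure hx, rfl⟩
  refine eq_top_iff.2 fun x _ => ?_
  obtain ⟨y, hy, hyx⟩ := hle x.2
  rwa [(closure s).subtype_injective hyx] at hy

variable {L : BooleanSubalgebra β}

lemma IsAtomIn.disjoint {a b : β} (ha : IsAtomIn L a) (hb : IsAtomIn L b) (hab : a ≠ b) :
    Disjoint a b := by
  rw [disjoint_iff]
  rcases ha.2.2 _ (L.inf_mem ha.1 hb.1) inf_le_left with h | h
  · exact h
  · rcases hb.2.2 a ha.1 (h ▸ inf_le_right) with h' | h'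
    exacts [absurd h' ha.2.1, absurd h' hab]

lemma exists_isAtomIn_le (hL : (L : Set β).Finite) {x : β} (hx : x ∈ L) (hx₀ : x ≠ ⊥) :
    ∃ a, IsAtomIn L a ∧ a ≤ x := by
  obtain ⟨a, hax, hmin⟩ :=
    (hL.subset (sep_subset _ fun y => y ≠ ⊥)).exists_le_minimal ⟨hx, hx₀⟩
  refine ⟨a, ⟨hmin.prop.1, hmin.prop.2, fun y hy hya => ?_⟩, hax⟩
  by_cases hy₀ : y = ⊥
  exacts [.inl hy₀, .inr (le_antisymm hya (hmin.2 ⟨hy, hy₀⟩ hya))]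

lemma sup_eq_top_of_range_eq_atoms (hL : (L : Set β).Finite) {n : ℕ} {e : Fin n → β}
    (hre : range e = {x | IsAtomIn L x}) : Finset.univ.sup e = ⊤ := by
  by_contra hne
  have hmem : Finset.univ.sup e ∈ L :=
    Finset.sup_mem _ L.bot_mem (fun _ hx _ hy => L.sup_mem hx hy) _ _ fun i _ =>
      (hre.le (mem_range_self i)).1
  obtain ⟨a, ha, hle⟩ := exists_isAtomIn_le hL (L.compl_mem hmem) fun h => hne (compl_eq_bot.1 h)
  obtain ⟨i, rfl⟩ := hre.ge ha
  exact ha.2.1 <| (disjoint_compl_right.mono_left (Finset.le_sup (Finset.mem_univ i))).eq_bot_of_le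
    hle

end Subalgebras

lemma StarFree.of_comp {B C : Type*} [BooleanAlgebra B] [BooleanAlgebra C] {n : ℕ}
    {b : Fin n → B} {φ : BoundedLatticeHom B C} (hφ : Injective φ)
    (h : StarFree fun i => φ (b i)) : StarFree b := by
  refine ⟨hφ ?_, fun J hJ hbot => h.2 J hJ ?_⟩
  · rw [map_finset_sup, TopHomClass.map_top]
    exact h.1
  · simpa only [InfHomClass.map_inf, map_finset_inf, map_compl', comp_def, BotHomClass.map_bot]
      using congrArg φ hbot

section PointsMeeting

variable {A X : Type*} [BooleanAlgebra A] (p : X → A)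

def pointsMeeting : SupBotHom A (Set X) where
  toFun a := {x | ¬Disjoint (p x) a}
  map_sup' _ _ := ext fun _ => disjoint_sup_right.not.trans not_and_or
  map_bot' := by ext x; simp

variable {p}

lemma mem_pointsMeeting {a : A} {x : X} : x ∈ pointsMeeting p a ↔ ¬Disjoint (p x) a := Iff.rfl

lemma pointsMeeting_top (hp : ∀ x, p x ≠ ⊥) : pointsMeeting p ⊤ = univ :=
  eq_univ_of_forall fun x => by simpa [mem_pointsMeeting] using hp x

lemma pointsMeeting_le_pointsMeeting_iff (hdense : ∀ a ≠ ⊥, a ∈ range p) {a b : A} :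
    pointsMeeting p a ≤ pointsMeeting p b ↔ a ≤ b := by
  refine ⟨fun hab => ?_, fun hab => OrderHomClass.mono _ hab⟩
  by_contra hnot
  obtain ⟨x, hx⟩ := hdense (a \ b) (sdiff_eq_bot_iff.not.2 hnot)
  have hxa : x ∈ pointsMeeting p a := by
    rw [mem_pointsMeeting, hx]
    exact fun h => sdiff_eq_bot_iff.not.2 hnot (h.eq_bot_of_le sdiff_le)
  exact hab hxa (hx ▸ disjoint_sdiff_self_left)

lemma pointsMeeting_injective (hdense : ∀ a ≠ ⊥, a ∈ range p) : Injective (pointsMeeting p) :=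
  fun _ _ h => le_antisymm ((pointsMeeting_le_pointsMeeting_iff hdense).1 h.le)
    ((pointsMeeting_le_pointsMeeting_iff hdense).1 h.ge)

lemma starFree_pointsMeeting (hp : ∀ x, p x ≠ ⊥) (hdense : ∀ a ≠ ⊥, a ∈ range p) {n : ℕ}
    {e : Fin n → A} (hdisj : Pairwise (Disjoint on e)) (hne : ∀ i, e i ≠ ⊥)
    (htop : Finset.univ.sup e = ⊤) : StarFree fun i => pointsMeeting p (e i) := by
  refine ⟨?_, fun J ⟨j₀, hj₀⟩ => ?_⟩
  · rw [← comp_def, ← map_finset_sup, htop, pointsMeeting_top hp, top_eq_univ]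
  · obtain ⟨x, hx⟩ := hdense (J.sup e) fun h => hne j₀ (le_bot_iff.1 (h ▸ Finset.le_sup hj₀))
    have hin : ∀ j ∈ J, x ∈ pointsMeeting p (e j) := fun j hj hdis =>
      hne j ((hx ▸ hdis).mono_left (Finset.le_sup hj) |>.eq_bot_of_le le_rfl)
    have hout : ∀ i ∈ Jᶜ, x ∉ pointsMeeting p (e i) := fun i hi =>
      not_not.2 <| hx ▸ Finset.disjoint_sup_left.2 fun j hj =>
        hdisj fun hji => Finset.mem_compl.1 hi (hji ▸ hj)
    refine ne_bot_of_le_ne_bot (singleton_ne_empty x) (le_inf ?_ ?_)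
    · exact Finset.le_inf_iff.2 fun j hj => singleton_subset_iff.2 (hin j hj)
    · exact Finset.le_inf_iff.2 fun i hi => singleton_subset_iff.2 (hout i hi)

end PointsMeeting

theorem statement13 (A : Type*) [BooleanAlgebra A] [Countable A] :
    ∃ (B : Type) (_ : BooleanAlgebra B) (f : A → B),
      Function.Injective f ∧
      boolGenBy (Set.range f) = Set.univ ∧
      Countable B ∧
      (∀ S : Set A, IsBoolSubalgebra S → S.Finite →
        ∀ (n : ℕ) (e : Fin n → A), Function.Injective e →
          Set.range e = {x : A | IsAtomIn S x} → StarFree (fun i => f (e i))) ∧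
      (∀ a b : A, f (a ⊔ b) = f a ⊔ f b) := by
  -- points are indexed by `ℕ` rather than by `A` itself so that `𝔅` lands in `Type`
  obtain ⟨ρ, hρ⟩ := exists_surjective_nat A
  let p : {k : ℕ // ρ k ≠ ⊥} → A := fun k => ρ k
  have hp : ∀ x, p x ≠ ⊥ := fun x => x.2
  have hdense : ∀ a ≠ ⊥, a ∈ range p := fun a ha =>
    let ⟨k, hk⟩ := hρ a
    ⟨⟨k, hk ▸ ha⟩, hk⟩
  let L := closure (range (pointsMeeting p))
  let f : A → L := codRestrict (pointsMeeting p) L fun a => subset_closure ⟨a, rfl⟩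
  refine ⟨L, inferInstance, f, fun a b h => pointsMeeting_injective hdense (congrArg Subtype.val h),
    ?_, (countable_closure (countable_range _)).to_subtype, ?_,
    fun a b => Subtype.ext (map_sup _ a b)⟩
  · rw [boolGenBy_eq_closure, range_codRestrict, closure_preimage_val, coe_top]
  · intro S hS hfin n e he hre
    let L' := hS.toBooleanSubalgebra
    have hat : ∀ i, IsAtomIn L' (e i) := fun i => hre.le (mem_range_self i)
    refine StarFree.of_comp L.subtype_injective (starFree_pointsMeeting hp hdense ?_ ?_ ?_)
    · exact fun i j hij => (hat i).disjoint (hat j) (he.ne hij)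
    · exact fun i => (hat i).2.1
    · exact sup_eq_top_of_range_eq_atoms (L := L') hfin hre
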